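/- arXiv:2502.13673 — 2 statements merged into one kernel-verified Lean document; each statement's English description precedes it below -/
import Mathlib

section
/- Let f be pseudo-involutory and let h be any power series of order 1 with h'(0)=1 such that f = h∘ĥ. Writing h(z) = z·h_o(z²) + z²·h_e(z²), the B-function of f satisfies z·B_f(z) = (2z·h_e(z)) ∘ (z·h_o(z)² - z²·h_e(z)²)⁻¹, where ⁻¹ denotes compositional inverse. -/
open PowerSeries

/-- Composition `f ∘ g` of formal power series over `ℝ`, i.e. `f(g(z))`
(the usual composition when `g` has zero constant term). -/
noncomputable def pscomp (f g : PowerSeries ℝ) : PowerSeries ℝ :=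
  PowerSeries.mk fun n => ∑ k ∈ Finset.range (n + 1), coeff k f * coeff n (g ^ k)

lemma coeff_pscomp (f g : PowerSeries ℝ) (n : ℕ) :
    coeff n (pscomp f g) = ∑ k ∈ Finset.range (n + 1), coeff k f * coeff n (g ^ k) :=
  coeff_mk n _

lemma coeff_pow_eq_zero {g : PowerSeries ℝ} (hg : constantCoeff g = 0)
    {n k : ℕ} (h : n < k) : coeff n (g ^ k) = 0 := by
  obtain ⟨t, ht⟩ : (X : PowerSeries ℝ) ∣ g := X_dvd_iff.mpr hg
  subst ht
  rw [mul_pow, ← X_pow_dvd_iff.mp (dvd_mul_right (X ^ k) (t ^ k)) n h]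

lemma pscomp_add (a b g : PowerSeries ℝ) :
    pscomp (a + b) g = pscomp a g + pscomp b g := by
  ext n
  simp [coeff_pscomp, add_mul, Finset.sum_add_distrib]

lemma pscomp_C (r : ℝ) (g : PowerSeries ℝ) : pscomp (C r) g = C r := by
  ext n
  rw [coeff_pscomp]
  rcases Nat.eq_zero_or_pos n with h | h
  · subst h; simp
  · rw [Finset.sum_eq_zero, coeff_C, if_neg (by omega)]
    intro k hk
    rcases Nat.eq_zero_or_pos k with h' | h'
    · subst h'; simp [coeff_one, Nat.pos_iff_ne_zero.mp h]
    · simp [coeff_C, Nat.pos_iff_ne_zero.mp h']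

lemma constantCoeff_pscomp (f g : PowerSeries ℝ) :
    constantCoeff (pscomp f g) = constantCoeff f := by
  have := coeff_pscomp f g 0
  simp only [Finset.range_one, Finset.sum_singleton, pow_zero, coeff_zero_eq_constantCoeff] at this
  simpa using this

lemma pscomp_X_left {g : PowerSeries ℝ} (hg : constantCoeff g = 0) :
    pscomp X g = g := by
  ext n
  rw [coeff_pscomp]
  cases n with
  | zero => simpa using hg.symm
  | succ m =>
    rw [Finset.sum_eq_single 1]
    · simp
    · intro k hk hk1
      simp [coeff_X, hk1]
    · intro h
      simp only [Finset.mem_range, not_lt] at h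
      omega

lemma pscomp_X_right (f : PowerSeries ℝ) : pscomp f X = f := by
  ext n
  rw [coeff_pscomp, Finset.sum_eq_single n]
  · simp [X_pow_eq]
  · intro k hk hkn
    rw [X_pow_eq, coeff_monomial, if_neg (fun h => hkn h.symm), mul_zero]
  · intro h; simp at h

lemma pscomp_zero_right (f : PowerSeries ℝ) :
    pscomp f 0 = C (constantCoeff f) := by
  ext n
  rw [coeff_pscomp, Finset.sum_eq_single 0]
  · rcases Nat.eq_zero_or_pos n with h | h
    · simp [h]
    · simp [coeff_C, coeff_one, Nat.pos_iff_ne_zero.mp h]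
  · intro k hk hk0
    simp [zero_pow hk0]
  · intro h; simp at h

lemma coeff_aeval {g : PowerSeries ℝ} (hg : constantCoeff g = 0)
    (p : Polynomial ℝ) (n : ℕ) :
    coeff n (Polynomial.aeval g p) =
      ∑ k ∈ Finset.range (n + 1), p.coeff k * coeff n (g ^ k) := by
  rw [Polynomial.aeval_def, Polynomial.eval₂_eq_sum_range, map_sum]
  have hterm : ∀ k, coeff n (algebraMap ℝ (PowerSeries ℝ) (p.coeff k) * g ^ k)
      = p.coeff k * coeff n (g ^ k) := fun k => by
    rw [PowerSeries.algebraMap_apply, coeff_C_mul]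
    simp
  simp only [hterm]
  set M := max (p.natDegree + 1) (n + 1) with hM
  rw [show (∑ k ∈ Finset.range (p.natDegree + 1), p.coeff k * coeff n (g ^ k))
      = ∑ k ∈ Finset.range M, p.coeff k * coeff n (g ^ k) from
    Finset.sum_subset (Finset.range_subset_range.mpr (le_max_left _ _)) (fun k _ hk => by
      rw [Polynomial.coeff_eq_zero_of_natDegree_lt (by
        simp only [Finset.mem_range, not_lt] at hk; omega), zero_mul])]
  exact (Finset.sum_subset (Finset.range_subset_range.mpr (le_max_right _ _)) (fun k _ hk => by
    rw [coeff_pow_eq_zero hg (by simp only [Finset.mem_range, not_lt] at hk; omega),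
      mul_zero])).symm

lemma coeff_pscomp_trunc {g : PowerSeries ℝ} (hg : constantCoeff g = 0)
    (f : PowerSeries ℝ) {n N : ℕ} (hn : n < N) :
    coeff n (pscomp f g) = coeff n (Polynomial.aeval g (trunc N f)) := by
  rw [coeff_aeval hg, coeff_pscomp]
  refine Finset.sum_congr rfl fun k hk => ?_
  rw [coeff_trunc, if_pos (lt_of_lt_of_le (Finset.mem_range.mp hk) hn)]

lemma pscomp_mul {g : PowerSeries ℝ} (hg : constantCoeff g = 0)
    (a b : PowerSeries ℝ) : pscomp (a * b) g = pscomp a g * pscomp b g := by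
  ext n
  rw [coeff_pscomp_trunc hg _ (Nat.lt_succ_self n)]
  have key : coeff n (Polynomial.aeval g (trunc (n+1) (a * b)))
      = coeff n (Polynomial.aeval g (trunc (n+1) a * trunc (n+1) b)) := by
    rw [coeff_aeval hg, coeff_aeval hg]
    refine Finset.sum_congr rfl fun k hk => ?_
    have hk' : k < n + 1 := Finset.mem_range.mp hk
    congr 1
    rw [coeff_trunc, if_pos hk', PowerSeries.coeff_mul, Polynomial.coeff_mul]
    refine Finset.sum_congr rfl fun p hp => ?_
    have hp' : p.1 + p.2 = k := Finset.HasAntidiagonal.mem_antidiagonal.mp hp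
    rw [coeff_trunc, coeff_trunc, if_pos (by omega), if_pos (by omega)]
  rw [key, map_mul, PowerSeries.coeff_mul, PowerSeries.coeff_mul]
  refine Finset.sum_congr rfl fun p hp => ?_
  have hp' : p.1 + p.2 = n := Finset.HasAntidiagonal.mem_antidiagonal.mp hp
  rw [← coeff_pscomp_trunc hg a (show p.1 < n+1 by omega),
      ← coeff_pscomp_trunc hg b (show p.2 < n+1 by omega)]

/-- Composition with `g` (having zero constant term) as a ring homomorphism in the
first argument. -/
noncomputable def pscompHom {g : PowerSeries ℝ} (hg : constantCoeff g = 0) :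
    PowerSeries ℝ →+* PowerSeries ℝ where
  toFun f := pscomp f g
  map_one' := by simpa using pscomp_C 1 g
  map_mul' := pscomp_mul hg
  map_zero' := by simpa using pscomp_C 0 g
  map_add' a b := pscomp_add a b g

lemma pscompHom_apply {g : PowerSeries ℝ} (hg : constantCoeff g = 0)
    (f : PowerSeries ℝ) : pscompHom hg f = pscomp f g := rfl

lemma pscomp_pow {g : PowerSeries ℝ} (hg : constantCoeff g = 0)
    (a : PowerSeries ℝ) (k : ℕ) : pscomp (a ^ k) g = pscomp a g ^ k := by
  rw [← pscompHom_apply hg, map_pow, pscompHom_apply]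

lemma pscomp_neg (a g : PowerSeries ℝ) : pscomp (-a) g = -pscomp a g := by
  ext n
  simp [coeff_pscomp, Finset.sum_neg_distrib]

lemma pscomp_sub (a b g : PowerSeries ℝ) :
    pscomp (a - b) g = pscomp a g - pscomp b g := by
  rw [sub_eq_add_neg, pscomp_add, pscomp_neg, sub_eq_add_neg]

lemma pscomp_assoc {b c : PowerSeries ℝ} (hb : constantCoeff b = 0)
    (hc : constantCoeff c = 0) (a : PowerSeries ℝ) :
    pscomp (pscomp a b) c = pscomp a (pscomp b c) := by
  have hbc : constantCoeff (pscomp b c) = 0 := by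
    rw [constantCoeff_pscomp]; exact hb
  ext n
  rw [coeff_pscomp, coeff_pscomp]
  simp only [coeff_pscomp, Finset.sum_mul]
  have ext_inner : ∀ k ∈ Finset.range (n+1),
      (∑ j ∈ Finset.range (k+1), coeff j a * coeff k (b ^ j) * coeff n (c ^ k))
      = ∑ j ∈ Finset.range (n+1), coeff j a * coeff k (b ^ j) * coeff n (c ^ k) := by
    intro k hk
    refine (Finset.sum_subset (Finset.range_subset_range.mpr
      (by simpa [Nat.succ_le_succ_iff, Nat.lt_succ_iff] using Finset.mem_range.mp hk))
      fun j _ hj => ?_)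
    rw [coeff_pow_eq_zero hb (by simp only [Finset.mem_range, not_lt] at hj; omega),
      mul_zero, zero_mul]
  rw [Finset.sum_congr rfl ext_inner, Finset.sum_comm]
  refine Finset.sum_congr rfl fun j _ => ?_
  rw [← pscomp_pow hc, coeff_pscomp, Finset.mul_sum]
  refine Finset.sum_congr rfl fun k _ => ?_
  ring

lemma pscomp_eq_zero_iff {s : PowerSeries ℝ} (hs0 : constantCoeff s = 0)
    (hs : s ≠ 0) {a : PowerSeries ℝ} (h : pscomp a s = 0) : a = 0 := by
  by_contra ha
  have hex : ∃ n, coeff n a ≠ 0 := by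
    by_contra hc
    push_neg at hc
    exact ha (PowerSeries.ext fun n => by rw [hc n, map_zero])
  set m := Nat.find hex with hmdef
  have hm : coeff m a ≠ 0 := Nat.find_spec hex
  obtain ⟨u, hu⟩ : (X : PowerSeries ℝ) ^ m ∣ a := by
    rw [X_pow_dvd_iff]
    intro k hk
    by_contra hk0
    exact Nat.find_min hex hk hk0
  have hu0 : constantCoeff u ≠ 0 := by
    intro h0
    apply hm
    rw [hu, coeff_X_pow_mul' , if_pos le_rfl]
    simpa using h0
  rw [hu, pscomp_mul hs0, pscomp_pow hs0, pscomp_X_left hs0] at h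
  rcases mul_eq_zero.mp h with h' | h'
  · exact pow_ne_zero m hs h'
  · exact hu0 (by rw [← constantCoeff_pscomp u s, h', map_zero])

lemma pscomp_injective {s : PowerSeries ℝ} (hs0 : constantCoeff s = 0)
    (hs : s ≠ 0) {a b : PowerSeries ℝ} (h : pscomp a s = pscomp b s) : a = b := by
  have := pscomp_eq_zero_iff hs0 hs (a := a - b) (by rw [pscomp_sub, h, sub_self])
  linear_combination (norm := abel) this

/-- If f is pseudo-involutory and f = h∘ĥ with h(z) = z·h_o(z²) + z²·h_e(z²),
then z·B_f(z) = (2z·h_e(z)) ∘ (z·h_o(z)² - z²·h_e(z)²)⁻¹ (compositional inverse). -/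
theorem stmt_7 (f h hbar ho he B wbar : PowerSeries ℝ)
    (hf0 : constantCoeff f = 0) (hf1 : coeff 1 f = 1)
    (hpi : pscomp f (-f) = -X)
    (hh0 : constantCoeff h = 0) (hh1 : coeff 1 h = 1)
    (hi1 : pscomp h hbar = X) (hi2 : pscomp hbar h = X)
    -- f = h ∘ ĥ where ĥ(z) = -h̄(-z)
    (hfh : f = pscomp h (-(pscomp hbar (-X))))
    -- decomposition of h into odd and even parts
    (hdec : h = X * pscomp ho (X ^ 2) + X ^ 2 * pscomp he (X ^ 2))
    -- B is the B-function of f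
    (hB : f - X = X * f * pscomp B (X * f))
    -- wbar is the compositional inverse of w = z·h_o² - z²·h_e²
    (hw1 : pscomp (X * ho ^ 2 - X ^ 2 * he ^ 2) wbar = X)
    (hw2 : pscomp wbar (X * ho ^ 2 - X ^ 2 * he ^ 2) = X) :
    X * B = pscomp (2 * X * he) wbar := by
  have hbar0 : constantCoeff hbar = 0 := by
    have := congrArg (constantCoeff) hi2
    rwa [constantCoeff_pscomp, constantCoeff_X] at this
  have hXneg : constantCoeff (-X : PowerSeries ℝ) = 0 := by simp
  have hX2 : constantCoeff ((X : PowerSeries ℝ) ^ 2) = 0 := by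
    simp [map_pow, constantCoeff_X]
  set g : PowerSeries ℝ := -(pscomp hbar (-X)) with hgdef
  have hg0 : constantCoeff g = 0 := by
    rw [hgdef, map_neg, constantCoeff_pscomp, hbar0, neg_zero]
  set hm : PowerSeries ℝ := -(pscomp h (-X)) with hmdef
  have key1 : pscomp hm g = X := by
    have e1 : pscomp (-X) g = pscomp hbar (-X) := by
      rw [pscomp_neg, pscomp_X_left hg0, hgdef, neg_neg]
    rw [hmdef, pscomp_neg, pscomp_assoc hXneg hg0 h, e1,
      ← pscomp_assoc hbar0 hXneg h, hi1, pscomp_X_left hXneg, neg_neg]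
  set A : PowerSeries ℝ := pscomp ho (X ^ 2) with hAdef
  set Bs : PowerSeries ℝ := pscomp he (X ^ 2) with hBsdef
  have hX2neg : pscomp (X ^ 2) (-X) = X ^ 2 := by
    rw [pscomp_pow hXneg, pscomp_X_left hXneg, neg_pow, pow_two, neg_mul_neg,
      ← pow_two]
    ring
  have hAeven : pscomp A (-X) = A := by
    rw [hAdef, pscomp_assoc hX2 hXneg, hX2neg]
  have hBseven : pscomp Bs (-X) = Bs := by
    rw [hBsdef, pscomp_assoc hX2 hXneg, hX2neg]
  have hmeq : hm = X * A - X ^ 2 * Bs := by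
    rw [hmdef, hdec, pscomp_add, pscomp_mul hXneg, pscomp_mul hXneg,
      pscomp_X_left hXneg, hAeven, hBseven, hX2neg]
    ring
  set w : PowerSeries ℝ := X * ho ^ 2 - X ^ 2 * he ^ 2 with hwdef
  have hw0 : constantCoeff w = 0 := by
    rw [hwdef]
    simp [map_pow, constantCoeff_X]
  have hprod : hm * h = pscomp w (X ^ 2) := by
    rw [hwdef, pscomp_sub, pscomp_mul hX2, pscomp_mul hX2, pscomp_pow hX2,
      pscomp_pow hX2, pscomp_pow hX2, pscomp_X_left hX2, ← hAdef, ← hBsdef,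
      hmeq, hdec]
    ring
  have g2 : pscomp (X ^ 2) g = g ^ 2 := by
    rw [pscomp_pow hg0, pscomp_X_left hg0]
  have hg20 : constantCoeff (g ^ 2) = 0 := by
    rw [map_pow, hg0]; ring
  have hfg : f = pscomp h g := hfh
  have eq_a : X * f = pscomp w (g ^ 2) := by
    rw [← g2]
    rw [← pscomp_assoc hX2 hg0]
    rw [← hprod]
    rw [pscomp_mul hg0]
    rw [key1]
    rw [← hfg]
  have htwo : pscomp (2 * X * he) (X ^ 2) = 2 * X ^ 2 * Bs := by
    rw [pscomp_mul hX2, pscomp_mul hX2, pscomp_X_left hX2, ← hBsdef]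
    congr 1
    congr 1
    exact map_ofNat (pscompHom hX2) 2
  have eq_b : f - X = pscomp (2 * X * he) (g ^ 2) := by
    have hd : h - hm = pscomp (2 * X * he) (X ^ 2) := by
      rw [htwo, hdec, hmeq]; ring
    calc f - X = pscomp h g - pscomp hm g := by rw [← hfg, key1]
    _ = pscomp (h - hm) g := (pscomp_sub _ _ _).symm
    _ = pscomp (pscomp (2 * X * he) (X ^ 2)) g := by rw [hd]
    _ = pscomp (2 * X * he) (g ^ 2) := by rw [pscomp_assoc hX2 hg0, g2]
  have gne : g ≠ 0 := by
    intro hgz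
    have hfz : f = 0 := by rw [hfg, hgz, pscomp_zero_right, hh0, map_zero]
    rw [hfz, map_zero] at hf1
    exact one_ne_zero hf1.symm
  have g2ne : g ^ 2 ≠ 0 := pow_ne_zero 2 gne
  have heq : 2 * X * he = w * pscomp B w := by
    refine pscomp_injective hg20 g2ne ?_
    conv_rhs => rw [pscomp_mul hg20, pscomp_assoc hw0 hg20 B]
    rw [← eq_a, ← eq_b, hB]
  have wbar0 : constantCoeff wbar = 0 := by
    have := congrArg (constantCoeff) hw2
    rwa [constantCoeff_pscomp, constantCoeff_X] at this
  rw [heq, pscomp_mul wbar0, pscomp_assoc hw0 wbar0 B]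
  rw [show pscomp w wbar = X from hw1, pscomp_X_right]
end

section
/- Let f = z(2C(z) - 1) where C is the Catalan generating function satisfying C = 1 + zC². Then f is pseudo-involutory and its B-function is B_f = 2C, i.e., f(z) - z = z·f(z)·2·C(z·f(z)). -/
/-!
Since `pscomp` agrees with Mathlib's substitution `PowerSeries.subst` whenever the inner series has
zero constant term, composing with it is a ring homomorphism. Hence for such `g` the series
`C(g)` solves `D = 1 + g D²`, and this equation has a unique solution because `1 - g (D + E)` is a
unit. With `u = 2C - 1` one checks `C/u` solves it for `g = -zu` and `C²/u` for `g = z²u`; the two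
claimed identities are then polynomial identities in `z`, `C`, `u⁻¹` modulo `C = 1 + zC²` and
`u⁻¹u = 1`.
-/

open PowerSeries

theorem pscomp_eq_subst {f g : PowerSeries ℝ} (hg : constantCoeff g = 0) :
    pscomp f g = f.subst g := by
  ext n
  rw [coeff_subst' (HasSubst.of_constantCoeff_zero' hg), pscomp, coeff_mk,
    finsum_eq_sum_of_support_subset (s := Finset.range (n + 1))]
  · rfl
  · refine Function.support_subset_iff'.mpr fun d hd => ?_
    rw [Finset.coe_range, Set.mem_Iio, not_lt] at hd
    rw [X_pow_dvd_iff.mp (pow_dvd_pow_of_dvd (X_dvd_iff.mpr hg) d) n (by omega), smul_zero]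

namespace PowerSeries

theorem eq_of_eq_one_add_mul_sq {R : Type*} [CommRing R] {g D E : R⟦X⟧}
    (hg : constantCoeff g = 0) (hD : D = 1 + g * D ^ 2) (hE : E = 1 + g * E ^ 2) : D = E := by
  have hunit : IsUnit (1 - g * (D + E)) := by
    simp [isUnit_iff_constantCoeff, hg]
  rw [← sub_eq_zero, ← hunit.mul_right_eq_zero]
  linear_combination hD - hE

theorem subst_eq_of_eq_one_add_mul_sq {R : Type*} [CommRing R] {C g E : R⟦X⟧}
    (hg : constantCoeff g = 0) (hC : C = 1 + X * C ^ 2) (hE : E = 1 + g * E ^ 2) :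
    C.subst g = E := by
  refine eq_of_eq_one_add_mul_sq hg ?_ hE
  conv_lhs => rw [hC]
  rw [← coe_substAlgHom (HasSubst.of_constantCoeff_zero' hg)]
  simp only [map_add, map_mul, map_pow, map_one, substAlgHom_X]

section Catalan

variable {k : Type*} [Field k] {C : k⟦X⟧}

theorem inv_mul_cancel_two_mul_sub_one (hC : C = 1 + X * C ^ 2) :
    (2 * C - 1)⁻¹ * (2 * C - 1) = 1 := by
  have hC0 : constantCoeff C = 1 := by simpa using congrArg constantCoeff hC
  exact PowerSeries.inv_mul_cancel _ (by simp [hC0, map_ofNat]; norm_num)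

theorem subst_neg_X_mul_two_mul_sub_one (hC : C = 1 + X * C ^ 2) :
    C.subst (-(X * (2 * C - 1))) = C * (2 * C - 1)⁻¹ := by
  have hinv := inv_mul_cancel_two_mul_sub_one hC
  set u := 2 * C - 1
  refine subst_eq_of_eq_one_add_mul_sq (by simp) hC ?_
  linear_combination (u⁻¹ * C - u⁻¹ + 1) * hinv + (-u * u⁻¹ ^ 2) * hC

theorem subst_X_mul_X_mul_two_mul_sub_one (hC : C = 1 + X * C ^ 2) :
    C.subst (X * (X * (2 * C - 1))) = C ^ 2 * (2 * C - 1)⁻¹ := by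
  have hinv := inv_mul_cancel_two_mul_sub_one hC
  set u := 2 * C - 1
  refine subst_eq_of_eq_one_add_mul_sq (by simp) hC ?_
  linear_combination (-C ^ 2 * u⁻¹ + u * u⁻¹ + 1) * hinv +
    (u * u⁻¹ ^ 2 * (X * C ^ 2 + C - 1)) * hC

end Catalan

end PowerSeries

theorem stmt_8_general (Cs : PowerSeries ℝ)
    (hCeq : Cs = 1 + X * Cs ^ 2) :
    pscomp (X * (2 * Cs - 1)) (-(X * (2 * Cs - 1))) = -X ∧
      X * (2 * Cs - 1) - X =
        X * (X * (2 * Cs - 1)) * (2 * pscomp Cs (X * (X * (2 * Cs - 1)))) := by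
  have hinv := inv_mul_cancel_two_mul_sub_one hCeq
  have hneg : constantCoeff (-(X * (2 * Cs - 1))) = 0 := by simp
  rw [pscomp_eq_subst hneg, pscomp_eq_subst (by simp),
    subst_X_mul_X_mul_two_mul_sub_one hCeq]
  constructor
  · rw [← coe_substAlgHom (HasSubst.of_constantCoeff_zero' hneg)]
    simp only [map_mul, map_sub, map_ofNat, map_one, substAlgHom_X]
    rw [coe_substAlgHom, subst_neg_X_mul_two_mul_sub_one hCeq]
    linear_combination (-2 * X * Cs) * hinv
  · linear_combination 2 * X * hCeq + (-2 * X ^ 2 * Cs ^ 2) * hinv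

/-- For f = z(2C - 1) with C the Catalan series (C = 1 + zC²), f is
pseudo-involutory and B_f = 2C : f(z) - z = z·f(z)·2·C(z·f(z)). -/
theorem stmt_8 (Cs : PowerSeries ℝ)
    (hC0 : constantCoeff Cs = 1) (hCeq : Cs = 1 + X * Cs ^ 2) :
    pscomp (X * (2 * Cs - 1)) (-(X * (2 * Cs - 1))) = -X ∧
      X * (2 * Cs - 1) - X =
        X * (X * (2 * Cs - 1)) * (2 * pscomp Cs (X * (X * (2 * Cs - 1)))) :=
  stmt_8_general Cs hCeq
end
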